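/- arXiv:2509.15471 — 2 statements merged into one kernel-verified Lean document; each statement's English description precedes it below -/
import Mathlib

section
/- Let n = 2 and let f(w) = (1/2)⟨w, Aw⟩ − ⟨b, w⟩ + c be a quadratic function on ℝ² with A symmetric positive definite. Let x ∈ ℝ² with g := ∇f(x) ≠ 0, let t := 2‖g‖²/⟨g, Ag⟩, y := x − t·g, and h := ∇f(y). Assume g and h are linearly independent, and define Δ := ⟨h, Ah⟩⟨g, Ag⟩ − ⟨g, Ah⟩², α := (⟨h, g⟩⟨g, Ah⟩ − ⟨g, g⟩⟨h, Ah⟩)/Δ, β := (−⟨h, g⟩⟨g, Ag⟩ + ⟨g, g⟩⟨h, Ag⟩)/Δ, and p := x + α·g + β·h. Then ∇f(p) = 0; that is, p = A⁻¹b is the unique global minimizer of f, so the Method of Ellipcenters solves the problem in one step (coinciding with Newton's method in ℝ²). -/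
/-!
Since `g` and `h` are linearly independent, the Gram determinant `Δ` of the positive definite
form `(u, v) ↦ ⟨u, A v⟩` on them is positive (strict Cauchy–Schwarz), and `α`, `β` are the
Cramer solution of the normal equations making the residual `∇f(p) = g + α A g + β A h`
orthogonal to both `g` and `h`. In `ℝ²` these two vectors span everything, so the residual
vanishes.
-/

open Matrix

theorem Matrix.PosDef.isSymm {n : Type*} {A : Matrix n n ℝ} (hA : A.PosDef) : A.IsSymm :=
  isHermitian_iff_isSymm.mp hA.isHermitian

variable {n : Type*} [Fintype n]

theorem Matrix.IsSymm.dotProduct_mulVec_comm {R : Type*} [CommSemiring R] {A : Matrix n n R}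
    (hA : A.IsSymm) (u v : n → R) : u ⬝ᵥ A *ᵥ v = v ⬝ᵥ A *ᵥ u := by
  rw [dotProduct_mulVec, dotProduct_comm, ← mulVec_transpose, hA.eq]

theorem Matrix.PosDef.gram_det_pos {A : Matrix n n ℝ} (hA : A.PosDef) {g h : n → ℝ}
    (hgh : LinearIndependent ℝ ![g, h]) :
    0 < (h ⬝ᵥ A *ᵥ h) * (g ⬝ᵥ A *ᵥ g) - (g ⬝ᵥ A *ᵥ h) ^ 2 := by
  obtain ⟨hh, hsmul⟩ := linearIndependent_fin2.mp hgh
  simp only [cons_val_one, cons_val_zero] at hh hsmul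
  have hquad (s : ℝ) :
      0 < (h ⬝ᵥ A *ᵥ h) * (s * s) + 2 * (g ⬝ᵥ A *ᵥ h) * s + g ⬝ᵥ A *ᵥ g := by
    have hne : s • h + g ≠ 0 := fun hs ↦
      hsmul (-s) (by rwa [neg_smul, neg_eq_iff_add_eq_zero])
    have := hA.dotProduct_mulVec_pos hne
    simp only [star_trivial, mulVec_add, mulVec_smul, dotProduct_add, add_dotProduct,
      dotProduct_smul, smul_dotProduct, smul_eq_mul, hA.isSymm.dotProduct_mulVec_comm h g] at this
    linarith
  have := discrim_lt_zero (hA.dotProduct_mulVec_pos hh).ne' hquad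
  rw [discrim, star_trivial] at this
  linarith

theorem dotProduct_add_smul_mulVec_add_smul_mulVec_eq_zero {K : Type*} [Field K]
    {A : Matrix n n K} (hA : A.IsSymm) {g h : n → K} {Δ α β : K}
    (hΔ : Δ = (h ⬝ᵥ A *ᵥ h) * (g ⬝ᵥ A *ᵥ g) - (g ⬝ᵥ A *ᵥ h) ^ 2) (hΔ0 : Δ ≠ 0)
    (hα : α = ((h ⬝ᵥ g) * (g ⬝ᵥ A *ᵥ h) - (g ⬝ᵥ g) * (h ⬝ᵥ A *ᵥ h)) / Δ)
    (hβ : β = (-(h ⬝ᵥ g) * (g ⬝ᵥ A *ᵥ g) + (g ⬝ᵥ g) * (h ⬝ᵥ A *ᵥ g)) / Δ) :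
    g ⬝ᵥ (g + α • A *ᵥ g + β • A *ᵥ h) = 0 ∧ h ⬝ᵥ (g + α • A *ᵥ g + β • A *ᵥ h) = 0 := by
  rw [hA.dotProduct_mulVec_comm h g] at hβ
  simp only [dotProduct_add, dotProduct_smul, smul_eq_mul, hA.dotProduct_mulVec_comm h g,
    dotProduct_comm h g, hα, hβ]
  constructor
  · field_simp
    linear_combination (g ⬝ᵥ g) * hΔ
  · field_simp
    linear_combination (g ⬝ᵥ h) * hΔ

theorem eq_zero_of_forall_dotProduct_eq_zero_of_linearIndependent {K ι : Type*} [Field K]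
    [LinearOrder K] [IsStrictOrderedRing K] [Fintype ι] {b : ι → n → K}
    (hb : LinearIndependent K b) (hcard : Fintype.card ι = Fintype.card n) {v : n → K}
    (hv : ∀ i, b i ⬝ᵥ v = 0) : v = 0 := by
  have hspan := hb.span_eq_top_of_card_eq_finrank' (by simpa using hcard)
  obtain ⟨c, hc⟩ :=
    (Submodule.mem_span_range_iff_exists_fun K).mp (hspan ▸ Submodule.mem_top : v ∈ _)
  refine dotProduct_self_eq_zero.mp ?_
  calc v ⬝ᵥ v = (∑ i, c i • b i) ⬝ᵥ v := by rw [hc]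
    _ = 0 := by simp [sum_dotProduct, hv]

theorem stmt5_general (A : Matrix (Fin 2) (Fin 2) ℝ) (hA : A.PosDef)
    (b : Fin 2 → ℝ)
    (x g : Fin 2 → ℝ) (hg : g = A.mulVec x - b)
    (h : Fin 2 → ℝ)
    (hindep : LinearIndependent ℝ ![g, h])
    (Δ α β : ℝ)
    (hΔ : Δ = (h ⬝ᵥ A.mulVec h) * (g ⬝ᵥ A.mulVec g) - (g ⬝ᵥ A.mulVec h) ^ 2)
    (hα : α = ((h ⬝ᵥ g) * (g ⬝ᵥ A.mulVec h) - (g ⬝ᵥ g) * (h ⬝ᵥ A.mulVec h)) / Δ)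
    (hβ : β = (-(h ⬝ᵥ g) * (g ⬝ᵥ A.mulVec g) + (g ⬝ᵥ g) * (h ⬝ᵥ A.mulVec g)) / Δ)
    (p : Fin 2 → ℝ) (hp : p = x + α • g + β • h) :
    A.mulVec p - b = 0 ∧ p = A⁻¹.mulVec b := by
  have hresidual : A *ᵥ p - b = g + α • A *ᵥ g + β • A *ᵥ h := by
    rw [hp, hg, mulVec_add, mulVec_add, mulVec_smul, mulVec_smul]
    abel
  have hΔ0 : Δ ≠ 0 := hΔ ▸ (hA.gram_det_pos hindep).ne'
  obtain ⟨hg_orth, hh_orth⟩ :=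
    dotProduct_add_smul_mulVec_add_smul_mulVec_eq_zero hA.isSymm hΔ hΔ0 hα hβ
  have hzero : A *ᵥ p - b = 0 :=
    eq_zero_of_forall_dotProduct_eq_zero_of_linearIndependent hindep rfl
      (Fin.forall_fin_two.mpr ⟨hresidual ▸ hg_orth, hresidual ▸ hh_orth⟩)
  let := hA.isUnit.invertible
  exact ⟨hzero, (inv_mulVec_eq_vec (sub_eq_zero.mp hzero).symm).symm⟩

/-- In dimension `n = 2`, the ellipcenter iterate `p` satisfies
`∇f(p) = 0`, i.e. `p = A⁻¹b` is the unique global minimizer of `f`: the Method of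
Ellipcenters solves the problem in one step (coinciding with Newton's method in ℝ²). -/
theorem stmt5 (A : Matrix (Fin 2) (Fin 2) ℝ) (hA : A.PosDef)
    (b : Fin 2 → ℝ) (c : ℝ) (f : (Fin 2 → ℝ) → ℝ)
    (hf : ∀ w, f w = (1/2) * (w ⬝ᵥ A.mulVec w) - b ⬝ᵥ w + c)
    (x g : Fin 2 → ℝ) (hg : g = A.mulVec x - b) (hg0 : g ≠ 0)
    (t : ℝ) (ht : t = 2 * (g ⬝ᵥ g) / (g ⬝ᵥ A.mulVec g))
    (y : Fin 2 → ℝ) (hy : y = x - t • g)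
    (h : Fin 2 → ℝ) (hh : h = A.mulVec y - b)
    (hindep : LinearIndependent ℝ ![g, h])
    (Δ α β : ℝ)
    (hΔ : Δ = (h ⬝ᵥ A.mulVec h) * (g ⬝ᵥ A.mulVec g) - (g ⬝ᵥ A.mulVec h) ^ 2)
    (hα : α = ((h ⬝ᵥ g) * (g ⬝ᵥ A.mulVec h) - (g ⬝ᵥ g) * (h ⬝ᵥ A.mulVec h)) / Δ)
    (hβ : β = (-(h ⬝ᵥ g) * (g ⬝ᵥ A.mulVec g) + (g ⬝ᵥ g) * (h ⬝ᵥ A.mulVec g)) / Δ)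
    (p : Fin 2 → ℝ) (hp : p = x + α • g + β • h) :
    A.mulVec p - b = 0 ∧ p = A⁻¹.mulVec b :=
  stmt5_general A hA b x g hg h hindep Δ α β hΔ hα hβ p hp
end

section
/- Let f(w) = (1/2)⟨w, Aw⟩ − ⟨b, w⟩ + c be a quadratic function on ℝⁿ with A symmetric positive definite, smallest eigenvalue λ₁, largest eigenvalue λₙ, and unique minimizer x* = A⁻¹b. Let (xᵏ)ₖ≥₀ be a sequence in ℝⁿ such that for every k: if ∇f(xᵏ) = 0 then xᵏ⁺¹ = xᵏ, and if ∇f(xᵏ) ≠ 0 then f(xᵏ⁺¹) ≤ f(xᵏ − t*ₖ·∇f(xᵏ)) where t*ₖ := ‖∇f(xᵏ)‖²/⟨∇f(xᵏ), A∇f(xᵏ)⟩. Then with η := 1 − λ₁/λₙ, for all k ≥ 0, ‖xᵏ − x*‖_A ≤ (√η)ᵏ · ‖x⁰ − x*‖_A, where ‖u‖_A := √⟨u, Au⟩. -/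
/-!
Write `e = x - x*` and `g = A e = ∇f(x)`. Since `f(w) = ½‖w - x*‖²_A + const`, the step condition
bounds `‖e'‖²_A` by the energy after the exact line-search step, which is
`‖e‖²_A - ‖g‖⁴ / ⟨g, A g⟩`. The Rayleigh bound gives `⟨g, A g⟩ ≤ λₙ ‖g‖²`, and Cauchy–Schwarz
applied to `‖e‖²_A = ⟨e, g⟩`, together with `λ₁ ‖e‖² ≤ ‖e‖²_A`, gives `λ₁ ‖e‖²_A ≤ ‖g‖²`.
Hence `‖g‖⁴ / ⟨g, A g⟩ ≥ (λ₁/λₙ) ‖e‖²_A`, so each step multiplies `‖e‖²_A` by at most `η`.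
-/

open Matrix

section QuadraticForm

variable {ι : Type*} [Fintype ι] {A : Matrix ι ι ℝ}

lemma dotProduct_self_nonneg {R : Type*} [Ring R] [LinearOrder R] [IsStrictOrderedRing R]
    (v : ι → R) : 0 ≤ v ⬝ᵥ v :=
  Finset.sum_nonneg fun i _ => mul_self_nonneg (v i)

lemma Matrix.IsHermitian.dotProduct_mulVec_comm (hA : A.IsHermitian) (u v : ι → ℝ) :
    u ⬝ᵥ A *ᵥ v = v ⬝ᵥ A *ᵥ u := by
  rw [dotProduct_mulVec, ← mulVec_transpose, (isHermitian_iff_isSymm.1 hA).eq, dotProduct_comm]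

lemma half_dotProduct_mulVec_sub_dotProduct_eq (hA : A.IsHermitian) {b xs : ι → ℝ}
    (hxs : A *ᵥ xs = b) (w : ι → ℝ) :
    (1 / 2) * (w ⬝ᵥ A *ᵥ w) - b ⬝ᵥ w
      = (1 / 2) * ((w - xs) ⬝ᵥ A *ᵥ (w - xs)) - (1 / 2) * (b ⬝ᵥ xs) := by
  have hsym := hA.dotProduct_mulVec_comm xs w
  rw [hxs] at hsym
  simp only [mulVec_sub, hxs, sub_dotProduct, dotProduct_sub]
  rw [hsym, dotProduct_comm xs b, dotProduct_comm w b]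
  ring

lemma dotProduct_mulVec_sub_smul (hA : A.IsHermitian) (e g : ι → ℝ) (t : ℝ) :
    (e - t • g) ⬝ᵥ A *ᵥ (e - t • g)
      = e ⬝ᵥ A *ᵥ e - 2 * t * (g ⬝ᵥ A *ᵥ e) + t ^ 2 * (g ⬝ᵥ A *ᵥ g) := by
  simp only [mulVec_sub, mulVec_smul, sub_dotProduct, dotProduct_sub, smul_dotProduct,
    dotProduct_smul, smul_eq_mul]
  rw [hA.dotProduct_mulVec_comm e g]
  ring

lemma dotProduct_mulVec_sub_exact_step (hA : A.IsHermitian) {e g : ι → ℝ} (hg : A *ᵥ e = g) :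
    (e - (g ⬝ᵥ g / g ⬝ᵥ A *ᵥ g) • g) ⬝ᵥ A *ᵥ (e - (g ⬝ᵥ g / g ⬝ᵥ A *ᵥ g) • g)
      = e ⬝ᵥ A *ᵥ e - (g ⬝ᵥ g) ^ 2 / (g ⬝ᵥ A *ᵥ g) := by
  rw [dotProduct_mulVec_sub_smul hA, hg]
  rcases eq_or_ne (g ⬝ᵥ A *ᵥ g) 0 with hP | hP
  · -- with `x / 0 = 0` the step length is `0` and both sides reduce to `e ⬝ᵥ A *ᵥ e`
    simp [hP]
  · field_simp
    ring

end QuadraticForm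

namespace Matrix.IsHermitian

variable {ι : Type*} [Fintype ι] [DecidableEq ι] {A : Matrix ι ι ℝ}

lemma posSemidef_sub_smul_one (hA : A.IsHermitian) {lo : ℝ} (h : ∀ i, lo ≤ hA.eigenvalues i) :
    (A - lo • 1).PosSemidef := by
  refine posSemidef_iff_isHermitian_and_spectrum_nonneg.2
    ⟨hA.sub (isHermitian_one.smul (IsSelfAdjoint.all lo)), ?_⟩
  rw [← Algebra.algebraMap_eq_smul_one, ← spectrum.sub_singleton_eq,
    hA.spectrum_real_eq_range_eigenvalues]
  rintro _ ⟨_, ⟨i, rfl⟩, _, rfl, rfl⟩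
  exact sub_nonneg.2 (h i)

lemma posSemidef_smul_one_sub (hA : A.IsHermitian) {hi : ℝ} (h : ∀ i, hA.eigenvalues i ≤ hi) :
    (hi • 1 - A).PosSemidef := by
  refine posSemidef_iff_isHermitian_and_spectrum_nonneg.2
    ⟨(isHermitian_one.smul (IsSelfAdjoint.all hi)).sub hA, ?_⟩
  rw [← Algebra.algebraMap_eq_smul_one, ← spectrum.singleton_sub_eq,
    hA.spectrum_real_eq_range_eigenvalues]
  rintro _ ⟨_, rfl, _, ⟨i, rfl⟩, rfl⟩
  exact sub_nonneg.2 (h i)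

lemma mul_dotProduct_self_le_dotProduct_mulVec (hA : A.IsHermitian) {lo : ℝ}
    (h : ∀ i, lo ≤ hA.eigenvalues i) (v : ι → ℝ) : lo * (v ⬝ᵥ v) ≤ v ⬝ᵥ A *ᵥ v := by
  have := (hA.posSemidef_sub_smul_one h).dotProduct_mulVec_nonneg v
  simpa [sub_mulVec, dotProduct_sub, smul_mulVec] using this

lemma dotProduct_mulVec_le_mul_dotProduct_self (hA : A.IsHermitian) {hi : ℝ}
    (h : ∀ i, hA.eigenvalues i ≤ hi) (v : ι → ℝ) : v ⬝ᵥ A *ᵥ v ≤ hi * (v ⬝ᵥ v) := by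
  have := (hA.posSemidef_smul_one_sub h).dotProduct_mulVec_nonneg v
  simpa [sub_mulVec, dotProduct_sub, smul_mulVec] using this

lemma mul_dotProduct_mulVec_le_mulVec_dotProduct_mulVec (hA : A.IsHermitian) {lo : ℝ}
    (hlo : 0 ≤ lo) (h : ∀ i, lo ≤ hA.eigenvalues i) (e : ι → ℝ) :
    lo * (e ⬝ᵥ A *ᵥ e) ≤ A *ᵥ e ⬝ᵥ A *ᵥ e := by
  have hCS : (e ⬝ᵥ A *ᵥ e) ^ 2 ≤ (e ⬝ᵥ e) * (A *ᵥ e ⬝ᵥ A *ᵥ e) := by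
    simpa only [dotProduct, sq] using Finset.sum_mul_sq_le_sq_mul_sq Finset.univ e (A *ᵥ e)
  have hray := hA.mul_dotProduct_self_le_dotProduct_mulVec h e
  have hG : 0 ≤ A *ᵥ e ⬝ᵥ A *ᵥ e := dotProduct_self_nonneg _
  have hE : 0 ≤ e ⬝ᵥ A *ᵥ e := (mul_nonneg hlo (dotProduct_self_nonneg e)).trans hray
  rcases hE.eq_or_lt with hE0 | hEpos
  · rw [← hE0, mul_zero]
    exact hG
  · refine le_of_mul_le_mul_right ?_ hEpos
    nlinarith [mul_le_mul_of_nonneg_left hCS hlo, mul_le_mul_of_nonneg_right hray hG]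

lemma div_mul_dotProduct_mulVec_le (hA : A.IsHermitian) {lo hi : ℝ} (hlo : 0 < lo)
    (hlo_le : ∀ i, lo ≤ hA.eigenvalues i) (hle_hi : ∀ i, hA.eigenvalues i ≤ hi) (e : ι → ℝ) :
    lo / hi * (e ⬝ᵥ A *ᵥ e) ≤ (A *ᵥ e ⬝ᵥ A *ᵥ e) ^ 2 / (A *ᵥ e ⬝ᵥ A *ᵥ (A *ᵥ e)) := by
  set g := A *ᵥ e
  rcases (dotProduct_self_nonneg g).eq_or_lt with hG0 | hG
  · simp [dotProduct_self_eq_zero.1 hG0.symm]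
  have hP := hA.mul_dotProduct_self_le_dotProduct_mulVec hlo_le g
  have hP' := hA.dotProduct_mulVec_le_mul_dotProduct_self hle_hi g
  have hPpos : 0 < g ⬝ᵥ A *ᵥ g := lt_of_lt_of_le (mul_pos hlo hG) hP
  have hhi : 0 < hi := pos_of_mul_pos_left (hPpos.trans_le hP') hG.le
  calc lo / hi * (e ⬝ᵥ A *ᵥ e) = lo * (e ⬝ᵥ A *ᵥ e) / hi := by ring
    _ ≤ (g ⬝ᵥ g) / hi := by
        gcongr
        exact hA.mul_dotProduct_mulVec_le_mulVec_dotProduct_mulVec hlo.le hlo_le e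
    _ = (g ⬝ᵥ g) ^ 2 / (hi * (g ⬝ᵥ g)) := by field_simp
    _ ≤ (g ⬝ᵥ g) ^ 2 / (g ⬝ᵥ A *ᵥ g) := by gcongr

end Matrix.IsHermitian

lemma Real.sqrt_le_sqrt_pow_mul_sqrt {a b η : ℝ} (hη : 0 ≤ η) {k : ℕ} (h : a ≤ η ^ k * b) :
    √a ≤ √η ^ k * √b := by
  have hpow : √(η ^ k) = √η ^ k :=
    (Real.sqrt_eq_iff_eq_sq (pow_nonneg hη k) (pow_nonneg (Real.sqrt_nonneg η) k)).2 <| by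
      rw [← pow_mul, mul_comm, pow_mul, Real.sq_sqrt hη]
  calc √a ≤ √(η ^ k * b) := Real.sqrt_le_sqrt h
    _ = √η ^ k * √b := by rw [Real.sqrt_mul (pow_nonneg hη k), hpow]

section SteepestDescent

variable {ι : Type*} [Fintype ι] [DecidableEq ι] {A : Matrix ι ι ℝ}

theorem dotProduct_mulVec_sub_le_of_steepestDescent_step (hA : A.IsHermitian) {lo hi : ℝ}
    (hlo : 0 < lo) (hlo_le : ∀ i, lo ≤ hA.eigenvalues i) (hle_hi : ∀ i, hA.eigenvalues i ≤ hi)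
    {b xs : ι → ℝ} (hxs : A *ᵥ xs = b) {c : ℝ} {f : (ι → ℝ) → ℝ}
    (hf : ∀ w, f w = (1 / 2) * (w ⬝ᵥ A *ᵥ w) - b ⬝ᵥ w + c) {x y : ι → ℝ}
    (hstep0 : A *ᵥ x - b = 0 → y = x)
    (hstep : A *ᵥ x - b ≠ 0 →
      f y ≤ f (x - (((A *ᵥ x - b) ⬝ᵥ (A *ᵥ x - b)) /
        ((A *ᵥ x - b) ⬝ᵥ A *ᵥ (A *ᵥ x - b))) • (A *ᵥ x - b))) :
    (y - xs) ⬝ᵥ A *ᵥ (y - xs) ≤ (1 - lo / hi) * ((x - xs) ⬝ᵥ A *ᵥ (x - xs)) := by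
  have hf' (w : ι → ℝ) :
      f w = (1 / 2) * ((w - xs) ⬝ᵥ A *ᵥ (w - xs)) + (c - (1 / 2) * (b ⬝ᵥ xs)) := by
    rw [hf, half_dotProduct_mulVec_sub_dotProduct_eq hA hxs]
    ring
  have hgrad : A *ᵥ x - b = A *ᵥ (x - xs) := by rw [mulVec_sub, hxs]
  rw [hgrad] at hstep0 hstep
  set e := x - xs
  by_cases hg : A *ᵥ e = 0
  · rw [hstep0 hg, hg, dotProduct_zero, mul_zero]
  · have hdecrease := hstep hg
    rw [hf', hf', sub_right_comm, dotProduct_mulVec_sub_exact_step hA rfl] at hdecrease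
    have := hA.div_mul_dotProduct_mulVec_le hlo hlo_le hle_hi e
    linarith

end SteepestDescent

/-- Under the same assumptions as Statement 8, with `η := 1 − λ₁/λₙ`,
the iterates satisfy `‖xᵏ − x*‖_A ≤ (√η)ᵏ ‖x⁰ − x*‖_A`, where `‖u‖_A := √⟨u, Au⟩`. -/
theorem stmt9 {n : ℕ} (A : Matrix (Fin n) (Fin n) ℝ) (hA : A.PosDef)
    (lam1 lamn : ℝ)
    (hlam1 : IsLeast (Set.range hA.1.eigenvalues) lam1)
    (hlamn : IsGreatest (Set.range hA.1.eigenvalues) lamn)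
    (b : Fin n → ℝ) (c : ℝ) (f : (Fin n → ℝ) → ℝ)
    (hf : ∀ w, f w = (1/2) * (w ⬝ᵥ A.mulVec w) - b ⬝ᵥ w + c)
    (xstar : Fin n → ℝ) (hxstar : xstar = A⁻¹.mulVec b)
    (x : ℕ → Fin n → ℝ)
    (hstep0 : ∀ k, A.mulVec (x k) - b = 0 → x (k + 1) = x k)
    (hstep : ∀ k, A.mulVec (x k) - b ≠ 0 →
      f (x (k + 1)) ≤
        f (x k - (((A.mulVec (x k) - b) ⬝ᵥ (A.mulVec (x k) - b)) /
            ((A.mulVec (x k) - b) ⬝ᵥ A.mulVec (A.mulVec (x k) - b))) • (A.mulVec (x k) - b)))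
    (η : ℝ) (hη : η = 1 - lam1 / lamn) :
    ∀ k : ℕ,
      Real.sqrt ((x k - xstar) ⬝ᵥ A.mulVec (x k - xstar)) ≤
        (Real.sqrt η) ^ k * Real.sqrt ((x 0 - xstar) ⬝ᵥ A.mulVec (x 0 - xstar)) := by
  have hlam1_pos : 0 < lam1 := by
    obtain ⟨i, rfl⟩ := hlam1.1
    exact hA.eigenvalues_pos i
  have hlam1_le : lam1 ≤ lamn := hlamn.2 hlam1.1
  have hη_nonneg : 0 ≤ η := by
    rw [hη, sub_nonneg]
    exact div_le_one_of_le₀ hlam1_le (hlam1_pos.trans_le hlam1_le).le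
  have hxstar_sol : A *ᵥ xstar = b := by
    rw [hxstar, mulVec_mulVec, mul_nonsing_inv A (A.isUnit_iff_isUnit_det.1 hA.isUnit),
      one_mulVec]
  have hcontract (k : ℕ) : (x (k + 1) - xstar) ⬝ᵥ A *ᵥ (x (k + 1) - xstar)
      ≤ η * ((x k - xstar) ⬝ᵥ A *ᵥ (x k - xstar)) :=
    hη ▸ dotProduct_mulVec_sub_le_of_steepestDescent_step hA.1 hlam1_pos
      (fun i => hlam1.2 ⟨i, rfl⟩) (fun i => hlamn.2 ⟨i, rfl⟩) hxstar_sol hf (hstep0 k) (hstep k)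
  exact fun k => Real.sqrt_le_sqrt_pow_mul_sqrt hη_nonneg
    (le_geom (u := fun k => (x k - xstar) ⬝ᵥ A *ᵥ (x k - xstar)) hη_nonneg k
      fun j _ => hcontract j)
end
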